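/- arXiv:1212.4372 — 4 statements merged into one kernel-verified Lean document; each statement's English description precedes it below -/
import Mathlib

section
/- Let n > m > 0 and x ∈ Σ^{n+m-1} with the middle segment (x_m,...,x_n) consisting of distinct elements. Define i_L = max{j ∈ [m-1] : (x_j,...,x_n) has a duplicate} (0 if none) and i_R = min{j ∈ [m-1] : (x_m,...,x_{n+j}) has a duplicate} (m if none). Then the sliding-window element distinctness outputs satisfy ED_n^{⊞m}(x) = 0^{i_L}1^{m-i_L} ∧ 1^{i_R}0^{m-i_R} ∧ ED_{m-1}^{⊞m}(x_1,...,x_{m-1},x_{n+1},...,x_{n+m-1}), where ∧ is bitwise conjunction. -/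
/-!
A window `[j, j+n-1]` with `1 ≤ j ≤ m` splits into a left part `[j, m-1]`, the middle `[m, n]`
and a right part `[n+1, n+j-1]`, and a function is injective on a union of three sets iff it is
injective on each union of two of them, since any two points lie in one of these. Injectivity on
left ∪ middle is `i_L < j` and on middle ∪ right is `j ≤ i_R`, because both families of intervals
are nested and the middle alone is duplicate-free. Left ∪ right is the image of the window
`[j, j+m-2]` of the spliced string `y` under the increasing map that skips the middle.
-/

open Set

theorem Set.injOn_union_union_iff {α β : Type*} {f : α → β} {s t u : Set α} :
    InjOn f (s ∪ t ∪ u) ↔ InjOn f (s ∪ t) ∧ InjOn f (t ∪ u) ∧ InjOn f (s ∪ u) := by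
  refine ⟨fun h ↦ ⟨h.mono ?_, h.mono ?_, h.mono ?_⟩, fun ⟨hst, htu, hsu⟩ ↦ ?_⟩
  · exact subset_union_left
  · exact union_subset_union_left u subset_union_right
  · exact union_subset_union_left u subset_union_left
  rintro a ((ha | ha) | ha) b ((hb | hb) | hb)
  all_goals first
    | apply hst <;> simp only [mem_union] <;> tauto
    | apply htu <;> simp only [mem_union] <;> tauto
    | apply hsu <;> simp only [mem_union] <;> tauto

theorem lt_iff_of_isGreatest_insert_zero {P : ℕ → Prop} (hP : Monotone P) {m i j : ℕ}
    (hPm : P m) (hi : IsGreatest (insert 0 {k | k ∈ Icc 1 (m - 1) ∧ ¬ P k}) i)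
    (hj : 1 ≤ j) (hjm : j ≤ m) : i < j ↔ P j := by
  constructor
  · intro hij
    rcases hjm.lt_or_eq with hjm | rfl
    · by_contra hPj
      have := hi.2 (mem_insert_of_mem 0 ⟨⟨hj, by omega⟩, hPj⟩)
      omega
    · exact hPm
  · intro hPj
    rcases hi.1 with rfl | ⟨-, hPi⟩
    · exact hj
    · by_contra! hji
      exact hPi (hP hji hPj)

theorem lt_iff_of_isLeast_insert {Q : ℕ → Prop} (hQ : Antitone Q) {m i k : ℕ}
    (hQ0 : Q 0) (hi : IsLeast (insert m {k | k ∈ Icc 1 (m - 1) ∧ ¬ Q k}) i)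
    (hkm : k < m) : k < i ↔ Q k := by
  constructor
  · intro hki
    rcases Nat.eq_zero_or_pos k with rfl | hk
    · exact hQ0
    · by_contra hQk
      have := hi.2 (mem_insert_of_mem m ⟨⟨hk, by omega⟩, hQk⟩)
      omega
  · intro hQk
    rcases hi.1 with rfl | ⟨-, hQi⟩
    · exact hkm
    · by_contra! hik
      exact hQi (hQ hik hQk)

/-- The position in `x` of the `k`-th letter of `x₁ ⋯ x_{m-1} x_{n+1} ⋯ x_{n+m-1}`. -/
def spliceIndex (m n k : ℕ) : ℕ := if k < m then k else k + n + 1 - m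

theorem spliceIndex_strictMono {m n : ℕ} (hmn : m ≤ n) : StrictMono (spliceIndex m n) := by
  intro a b hab
  unfold spliceIndex
  split_ifs <;> omega

theorem image_spliceIndex_Icc {m n j : ℕ} (hj : 1 ≤ j) (hjm : j ≤ m) :
    spliceIndex m n '' Icc j (j + m - 2) = Ico j m ∪ Ioc n (n + (j - 1)) := by
  ext z
  simp only [spliceIndex, mem_image, mem_Icc, mem_union, mem_Ico, mem_Ioc]
  constructor
  · rintro ⟨k, hk, rfl⟩
    split_ifs <;> omega
  · rintro (hz | hz)
    · exact ⟨z, by omega, if_pos hz.2⟩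
    · exact ⟨z + m - n - 1, by omega, by rw [if_neg (by omega)]; omega⟩

theorem stmt10_general {α : Type*} (x y : ℕ → α) (n m : ℕ) (hmn : m < n)
    (hmid : Set.InjOn x (Set.Icc m n))
    (hy : ∀ j, (j ≤ m - 1 → y j = x j) ∧ (m ≤ j → y j = x (n + j - m + 1)))
    (iL iR : ℕ)
    (hiL : IsGreatest (insert 0
      {j | j ∈ Set.Icc 1 (m - 1) ∧ ¬ Set.InjOn x (Set.Icc j n)}) iL)
    (hiR : IsLeast (insert m
      {j | j ∈ Set.Icc 1 (m - 1) ∧ ¬ Set.InjOn x (Set.Icc m (n + j))}) iR) :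
    ∀ j, 1 ≤ j → j ≤ m →
      (Set.InjOn x (Set.Icc j (j + n - 1)) ↔
        iL < j ∧ j ≤ iR ∧ Set.InjOn y (Set.Icc j (j + m - 2))) := by
  intro j hj hjm
  have hy_eq : y = x ∘ spliceIndex m n := by
    funext k
    simp only [Function.comp_apply, spliceIndex]
    split_ifs with hk
    · exact (hy k).1 (by omega)
    · rw [(hy k).2 (by omega)]
      congr 1
      omega
  have hwindow : Icc j (j + n - 1) = Ico j m ∪ Icc m n ∪ Ioc n (n + (j - 1)) := by
    ext z
    simp only [mem_Icc, mem_union, mem_Ico, mem_Ioc]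
    omega
  have hleft : iL < j ↔ InjOn x (Icc j n) := lt_iff_of_isGreatest_insert_zero
    (fun a b hab h ↦ h.mono (Icc_subset_Icc_left hab)) hmid hiL hj hjm
  have hright : j ≤ iR ↔ InjOn x (Icc m (n + (j - 1))) := by
    rw [← lt_iff_of_isLeast_insert (fun a b hab h ↦ h.mono (Icc_subset_Icc_right (by omega)))
      (by simpa using hmid) hiR (by omega)]
    omega
  rw [hwindow, injOn_union_union_iff, Ico_union_Icc_eq_Icc hjm hmn.le,
    Icc_union_Ioc_eq_Icc hmn.le (by omega), ← hleft, ← hright, hy_eq,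
    (spliceIndex_strictMono hmn.le).injective.injOn.comp_iff, image_spliceIndex_Icc hj hjm]

/-- Let `n > m > 0`, `x ∈ Σ^{n+m-1}` (1-indexed) with distinct middle segment
`(x_m,…,x_n)`. With `i_L = max{j ∈ [m-1] : (x_j,…,x_n) has a duplicate}` (`0` if none),
`i_R = min{j ∈ [m-1] : (x_m,…,x_{n+j}) has a duplicate}` (`m` if none), and `y` the
concatenation `(x_1,…,x_{m-1},x_{n+1},…,x_{n+m-1})`, the `j`-th sliding-window
element-distinctness output (for `1 ≤ j ≤ m`) is the conjunction of the `j`-th bits of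
`0^{i_L} 1^{m-i_L}`, `1^{i_R} 0^{m-i_R}`, and `ED_{m-1}^{⊞m}(y)`. -/
theorem stmt10 {α : Type*} (x y : ℕ → α) (n m : ℕ) (hm : 0 < m) (hmn : m < n)
    (hmid : Set.InjOn x (Set.Icc m n))
    (hy : ∀ j, (j ≤ m - 1 → y j = x j) ∧ (m ≤ j → y j = x (n + j - m + 1)))
    (iL iR : ℕ)
    (hiL : IsGreatest (insert 0
      {j | j ∈ Set.Icc 1 (m - 1) ∧ ¬ Set.InjOn x (Set.Icc j n)}) iL)
    (hiR : IsLeast (insert m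
      {j | j ∈ Set.Icc 1 (m - 1) ∧ ¬ Set.InjOn x (Set.Icc m (n + j))}) iR) :
    ∀ j, 1 ≤ j → j ≤ m →
      (Set.InjOn x (Set.Icc j (j + n - 1)) ↔
        iL < j ∧ j ≤ iR ∧ Set.InjOn y (Set.Icc j (j + m - 2))) :=
  stmt10_general x y n m hmn hmid hy iL iR hiL hiR
end

section
/- With X the birthday random variable for uniform sampling with replacement from [n] (n ≥ 4), the second moment satisfies E[X²] ≤ 4n. -/
/-!
Write `D m = n (n - 1) ⋯ (n - m + 1)` for the descending factorial. A sample sequence of length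
`N` satisfies `m < X` exactly when its first `m` entries are distinct, which happens for
`D m * n ^ (N - m)` sequences. Summing `X² = ∑_{m < X} (2m + 1)` by layers gives
`∑ X² = ∑_{m < N} (2m + 1) D m n ^ (N - m)`. Since `m D m + D (m + 1) = n D m`, the part
`∑_{m < N} m D m n ^ (N - m)` telescopes to `n (n ^ N - D N) ≤ n ^ (N + 1)`, while
`D m ≤ n ^ m` bounds the rest by `N n ^ N`. For `N = n + 1` this is `E[X²] ≤ 2n + (n + 1) ≤ 4n`.
-/

open Finset Function

section Collisions

variable {α : Type*} {N : ℕ}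

def collisionTimes (f : Fin N → α) : Set ℕ :=
  {x | ∃ i j : Fin N, (i : ℕ) < x ∧ (j : ℕ) < x ∧ i ≠ j ∧ f i = f j}

theorem mem_collisionTimes_iff_not_injective (f : Fin N → α) {m : ℕ} (hm : m ≤ N) :
    m ∈ collisionTimes f ↔ ¬ Injective (f ∘ Fin.castLE hm) := by
  rw [not_injective_iff]
  constructor
  · rintro ⟨i, j, hi, hj, hij, hf⟩
    exact ⟨⟨i, hi⟩, ⟨j, hj⟩, hf, fun h => hij (Fin.ext (Fin.mk.inj_iff.1 h))⟩
  · rintro ⟨i, j, hf, hij⟩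
    exact ⟨_, _, i.isLt, j.isLt, fun h => hij (Fin.castLE_injective hm h), hf⟩

theorem collisionTimes_mono (f : Fin N → α) {x y : ℕ} (hx : x ∈ collisionTimes f)
    (hxy : x ≤ y) : y ∈ collisionTimes f := by
  obtain ⟨i, j, hi, hj, hij, hf⟩ := hx
  exact ⟨i, j, hi.trans_le hxy, hj.trans_le hxy, hij, hf⟩

theorem lt_iff_injective_comp_castLE {f : Fin N → α} {x : ℕ}
    (hx : IsLeast (collisionTimes f) x) {m : ℕ} (hm : m ≤ N) :
    m < x ↔ Injective (f ∘ Fin.castLE hm) := by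
  rw [← not_not (a := Injective _), ← mem_collisionTimes_iff_not_injective f hm]
  exact ⟨fun hmx hmem => (hx.2 hmem).not_gt hmx,
    fun hmem => not_le.1 fun hxm => hmem (collisionTimes_mono f hx.1 hxm)⟩

theorem le_of_isLeast_collisionTimes [Fintype α] (hN : Fintype.card α < N) {f : Fin N → α}
    {x : ℕ} (hx : IsLeast (collisionTimes f) x) : x ≤ N := by
  obtain ⟨i, j, hij, hf⟩ := Fintype.exists_ne_map_eq_of_card_lt f (by simpa using hN)
  exact hx.2 ⟨i, j, i.isLt, j.isLt, hij, hf⟩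

theorem card_filter_injective_comp_castLE (α : Type*) [Fintype α] [DecidableEq α] {m N : ℕ}
    (hm : m ≤ N) :
    #{f : Fin N → α | Injective (f ∘ Fin.castLE hm)} =
      (Fintype.card α).descFactorial m * Fintype.card α ^ (N - m) := by
  obtain ⟨k, rfl⟩ := Nat.exists_eq_add_of_le hm
  have e : {f : Fin (m + k) → α // Injective (f ∘ Fin.castLE hm)} ≃
      {g : Fin m → α // Injective g} × (Fin k → α) :=
    ((Fin.appendEquiv m k).symm.subtypeEquiv fun f => Iff.rfl).trans
      Equiv.prodSubtypeFstEquivSubtypeProd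
  rw [← Fintype.card_subtype, Fintype.card_congr e, Fintype.card_prod,
    Fintype.card_congr (Equiv.subtypeInjectiveEquivEmbedding _ _), Fintype.card_embedding_eq,
    Fintype.card_fun, Fintype.card_fin, Fintype.card_fin, Nat.add_sub_cancel_left]

theorem card_filter_lt_of_isLeast_collisionTimes [Fintype α] [DecidableEq α]
    {X : (Fin N → α) → ℕ} (hX : ∀ f, IsLeast (collisionTimes f) (X f)) {m : ℕ} (hm : m ≤ N) :
    #{f | m < X f} = (Fintype.card α).descFactorial m * Fintype.card α ^ (N - m) := by
  rw [← card_filter_injective_comp_castLE α hm]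
  congr 1
  exact filter_congr fun f _ => lt_iff_injective_comp_castLE (hX f) hm

end Collisions

theorem sum_range_ite_lt_eq_sq {x N : ℕ} (hx : x ≤ N) :
    ∑ m ∈ range N, (if m < x then 2 * m + 1 else 0) = x ^ 2 := by
  rw [← sum_filter,
    show {m ∈ range N | m < x} = range x by ext; simp only [mem_filter, mem_range]; omega]
  induction x with
  | zero => simp
  | succ x ih => rw [sum_range_succ, ih (by omega)]; ring

theorem Finset.sum_sq_eq_sum_range_mul_card_lt {ι : Type*} [Fintype ι] {X : ι → ℕ} {N : ℕ}
    (hX : ∀ i, X i ≤ N) :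
    ∑ i, X i ^ 2 = ∑ m ∈ range N, (2 * m + 1) * #{i | m < X i} := by
  calc ∑ i, X i ^ 2 = ∑ i, ∑ m ∈ range N, (if m < X i then 2 * m + 1 else 0) :=
        sum_congr rfl fun i _ => (sum_range_ite_lt_eq_sq (hX i)).symm
    _ = ∑ m ∈ range N, (2 * m + 1) * #{i | m < X i} := by
        rw [sum_comm]
        refine sum_congr rfl fun m _ => ?_
        rw [← sum_filter, sum_const, smul_eq_mul, mul_comm]

theorem Nat.mul_descFactorial_add_descFactorial_succ (n k : ℕ) :
    k * n.descFactorial k + n.descFactorial (k + 1) = n * n.descFactorial k := by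
  rcases le_or_gt k n with hk | hk
  · rw [Nat.descFactorial_succ, ← add_mul, Nat.add_sub_cancel' hk]
  · simp [Nat.descFactorial_eq_zero_iff_lt.2 hk]

theorem sum_range_mul_descFactorial_mul_pow_add (n N : ℕ) :
    ∑ m ∈ range N, m * (n.descFactorial m * n ^ (N - m)) + n * n.descFactorial N =
      n * n ^ N := by
  induction N with
  | zero => simp
  | succ N ih =>
    have hsum : ∑ m ∈ range N, m * (n.descFactorial m * n ^ (N + 1 - m)) =
        n * ∑ m ∈ range N, m * (n.descFactorial m * n ^ (N - m)) := by
      rw [mul_sum]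
      refine sum_congr rfl fun m hm => ?_
      rw [Nat.sub_add_comm (mem_range.1 hm).le, pow_succ]
      ring
    rw [sum_range_succ, hsum, Nat.add_sub_cancel_left]
    linear_combination n * ih + n * Nat.mul_descFactorial_add_descFactorial_succ n N

theorem sum_range_descFactorial_mul_pow_le (n N : ℕ) :
    ∑ m ∈ range N, n.descFactorial m * n ^ (N - m) ≤ N * n ^ N := by
  calc ∑ m ∈ range N, n.descFactorial m * n ^ (N - m)
      ≤ ∑ m ∈ range N, n ^ m * n ^ (N - m) := by
        gcongr with m; exact Nat.descFactorial_le_pow n m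
    _ = N * n ^ N := by
        rw [← card_range N, ← smul_eq_mul, ← sum_const, card_range]
        exact sum_congr rfl fun m hm => by rw [← pow_add, Nat.add_sub_cancel' (mem_range.1 hm).le]

theorem sum_range_odd_mul_descFactorial_mul_pow_le (n N : ℕ) :
    ∑ m ∈ range N, (2 * m + 1) * (n.descFactorial m * n ^ (N - m)) ≤ (2 * n + N) * n ^ N := by
  calc ∑ m ∈ range N, (2 * m + 1) * (n.descFactorial m * n ^ (N - m))
      = 2 * ∑ m ∈ range N, m * (n.descFactorial m * n ^ (N - m)) +
          ∑ m ∈ range N, n.descFactorial m * n ^ (N - m) := by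
        simp only [add_mul, sum_add_distrib, one_mul, mul_assoc, ← mul_sum]
    _ ≤ 2 * (n * n ^ N) + N * n ^ N := by
        gcongr
        · exact sum_range_mul_descFactorial_mul_pow_add n N ▸ Nat.le_add_right _ _
        · exact sum_range_descFactorial_mul_pow_le n N
    _ = (2 * n + N) * n ^ N := by ring

theorem stmt15_general (n : ℕ) (X : (Fin (n + 1) → Fin n) → ℕ)
    (hX : ∀ f, IsLeast {x : ℕ |
        ∃ i j : Fin (n + 1), (i : ℕ) < x ∧ (j : ℕ) < x ∧ i ≠ j ∧ f i = f j} (X f)) :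
    (∑ f : Fin (n + 1) → Fin n, ((X f : ℝ)) ^ 2) / (n : ℝ) ^ (n + 1) ≤ 4 * n := by
  have hX_le : ∀ f, X f ≤ n + 1 := fun f =>
    le_of_isLeast_collisionTimes (by simp) (hX f)
  have hsum : ∑ f, X f ^ 2 ≤ (2 * n + (n + 1)) * n ^ (n + 1) := by
    rw [sum_sq_eq_sum_range_mul_card_lt hX_le, sum_congr rfl fun m hm => by
      rw [card_filter_lt_of_isLeast_collisionTimes hX (mem_range.1 hm).le, Fintype.card_fin]]
    exact sum_range_odd_mul_descFactorial_mul_pow_le n (n + 1)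
  rcases Nat.eq_zero_or_pos n with rfl | hn
  · simp
  rw [div_le_iff₀ (by positivity)]
  exact_mod_cast hsum.trans (by gcongr; omega)

/-- With `X` the birthday random variable (index of the first duplicate) for i.u.d.
samples from `[n]` (`n ≥ 4`), the second moment satisfies `E[X²] ≤ 4n`.  Since a
duplicate is guaranteed within `n + 1` samples, `X` is determined by the first
`n + 1` samples. -/
theorem stmt15 (n : ℕ) (hn : 4 ≤ n) (X : (Fin (n + 1) → Fin n) → ℕ)
    (hX : ∀ f, IsLeast {x : ℕ |
        ∃ i j : Fin (n + 1), (i : ℕ) < x ∧ (j : ℕ) < x ∧ i ≠ j ∧ f i = f j} (X f)) :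
    (∑ f : Fin (n + 1) → Fin n, ((X f : ℝ)) ^ 2) / (n : ℝ) ^ (n + 1) ≤ 4 * n :=
  stmt15_general n X hX
end

section
/- There is a deterministic comparison-based algorithm computing the maximum over all n sliding windows of length n in a string of length 2n-1, using O(n log n) comparisons and O(log n) words of working memory. -/
/-- A deterministic comparison-based branching program: at each state it compares two
input positions and branches; states may emit outputs `(i, p)` asserting that the
maximum of window `i` is the input value at position `p`. -/
def bpRun {M : ℕ} {α : Type} [LinearOrder α]
    (start : Fin M) (query : Fin M → ℕ × ℕ) (next : Fin M → Bool → Fin M)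
    (x : ℕ → α) : ℕ → Fin M
  | 0 => start
  | t + 1 =>
    let s := bpRun start query next x t
    next s (decide (x (query s).1 ≤ x (query s).2))

/-!
The algorithm keeps a block `[a, b)` of windows whose maxima are still to be reported, initially
`[0, n)`. It scans the middle window `m = ⌊(a + b) / 2⌋` for the position `p` of its maximum.
If `p < a + n`, then `p` lies in every window `i ∈ [a, m]`; sliding from window `j` to
window `j - 1` drops position `j + n - 1 ≠ p`, so the running maximum only has to be compared
with the entering element `x (j - 1)`. Otherwise `p ≥ a + n ≥ b`, `p` lies in every window
`i ∈ [m, b)`, and one slides to the right in the same way. Either way at most `2n` comparisons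
settle one half of the block and the other half becomes the new block, so `log₂ n + 1` rounds
suffice. The state consists of five numbers below `2n`, whence `(2n)^16` states after pairing.
-/

open Set

structure ComparisonProgram (S : Type) where
  start : S
  query : S → ℕ × ℕ
  next : S → Bool → S
  emit : S → Option (ℕ × ℕ)

namespace ComparisonProgram

variable {S α : Type} [LinearOrder α] (P : ComparisonProgram S) (x : ℕ → α)

def outcome (s : S) : Bool := decide (x (P.query s).1 ≤ x (P.query s).2)

def run : ℕ → S
  | 0 => P.start
  | t + 1 => P.next (run t) (P.outcome x (run t))

theorem run_succ (t : ℕ) : P.run x (t + 1) = P.next (P.run x t) (P.outcome x (P.run x t)) := rfl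

theorem bpRun_eq_run {M : ℕ} (B : ComparisonProgram (Fin M)) :
    bpRun B.start B.query B.next x = B.run x := by
  funext t
  induction t with
  | zero => rfl
  | succ t ih => simp only [bpRun, ih]; rfl

theorem run_mem_of_next_mem {I : Set S} (h0 : P.start ∈ I)
    (hnext : ∀ s ∈ I, P.next s (P.outcome x s) ∈ I) : ∀ t, P.run x t ∈ I
  | 0 => h0
  | t + 1 => hnext _ (run_mem_of_next_mem h0 hnext t)

theorem run_add_mem {Q : ℕ → Set S} {t D : ℕ} (h0 : P.run x t ∈ Q 0)
    (hnext : ∀ d < D, ∀ s ∈ Q d, ∀ c, P.next s c ∈ Q (d + 1)) :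
    ∀ d ≤ D, P.run x (t + d) ∈ Q d
  | 0, _ => h0
  | d + 1, hd => hnext d hd _ (run_add_mem h0 hnext d (by omega)) _

/-- The reduction mod `M` only matters on states that are never reached. -/
def encode (enc : S → ℕ) (dec : ℕ → S) (M : ℕ) (hM : 0 < M) :
    ComparisonProgram (Fin M) where
  start := ⟨enc P.start % M, Nat.mod_lt _ hM⟩
  query s := P.query (dec s)
  next s c := ⟨enc (P.next (dec s) c) % M, Nat.mod_lt _ hM⟩
  emit s := P.emit (dec s)

variable {P x} {enc : S → ℕ} {dec : ℕ → S} {M : ℕ} {hM : 0 < M}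

theorem val_run_encode (hdec : ∀ s, dec (enc s) = s) (hlt : ∀ t, enc (P.run x t) < M)
    (t : ℕ) : ((P.encode enc dec M hM).run x t).val = enc (P.run x t) := by
  induction t with
  | zero => exact Nat.mod_eq_of_lt (hlt 0)
  | succ t ih =>
    change enc (P.next (dec _) (P.outcome x (dec _))) % M = _
    rw [ih, hdec]
    exact Nat.mod_eq_of_lt (hlt (t + 1))

theorem emit_run_encode (hdec : ∀ s, dec (enc s) = s) (hlt : ∀ t, enc (P.run x t) < M)
    (t : ℕ) : (P.encode enc dec M hM).emit ((P.encode enc dec M hM).run x t) =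
      P.emit (P.run x t) := by
  change P.emit (dec _) = _
  rw [val_run_encode hdec hlt, hdec]

end ComparisonProgram

def IsArgmaxOn {β α : Type} [LinearOrder α] (f : β → α) (s : Set β) (a : β) : Prop :=
  a ∈ s ∧ IsMaxOn f s a

theorem IsArgmaxOn.ite_of_subset_insert {β α : Type} [LinearOrder α] {f : β → α}
    {s t : Set β} {a b : β} (h : IsArgmaxOn f s a) (ha : a ∈ t) (hb : b ∈ t)
    (hts : t ⊆ insert b s) : IsArgmaxOn f t (if f a ≤ f b then b else a) := by
  refine ⟨by split_ifs <;> assumption, isMaxOn_iff.2 fun y hy => ?_⟩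
  rcases hts hy with rfl | hy
  · split_ifs with hab
    exacts [le_rfl, le_of_not_ge hab]
  · have hya := isMaxOn_iff.1 h.2 y hy
    split_ifs with hab
    exacts [hya.trans hab, hya]

namespace SlidingWindowMax

def window (n i : ℕ) : Set ℕ := Ico i (i + n)

def mid (a b : ℕ) : ℕ := (a + b) / 2

theorem two_mul_mid_bounds (a b : ℕ) : 2 * mid a b ≤ a + b ∧ a + b < 2 * mid a b + 2 := by
  unfold mid; omega

/-- `[a, b)` is the block of pending windows. `scan a b j p`: `p` is the position of the maximum
of `x` on `[mid a b, j)`. `slideLeft a b j r` and `slideRight a b j r`: `r` is the position of the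
maximum of window `j`. -/
inductive State
  | scan (a b j p : ℕ)
  | slideLeft (a b j r : ℕ)
  | slideRight (a b j r : ℕ)
  | halt

open State

def enter (a b : ℕ) : State :=
  if a < b then scan a b (mid a b + 1) (mid a b) else halt

def query (n : ℕ) : State → ℕ × ℕ
  | scan _ _ j p => (p, j)
  | slideLeft _ _ j r => (r, j - 1)
  | slideRight _ _ j r => (r, j + n)
  | halt => (0, 0)

def next (n : ℕ) : State → Bool → State
  | scan a b j p, c =>
    if j < mid a b + n then scan a b (j + 1) (if c then j else p)
    else if p < a + n then slideLeft a b (mid a b) p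
    else slideRight a b (mid a b) p
  | slideLeft a b j r, c =>
    if a < j then slideLeft a b (j - 1) (if c then j - 1 else r) else enter (mid a b + 1) b
  | slideRight a b j r, c =>
    if j + 1 < b then slideRight a b (j + 1) (if c then j + n else r) else enter a (mid a b)
  | halt, _ => halt

def emit : State → Option (ℕ × ℕ)
  | slideLeft _ _ j r => some (j, r)
  | slideRight _ _ j r => some (j, r)
  | _ => none

def program (n : ℕ) : ComparisonProgram State := ⟨enter 0 n, query n, next n, emit⟩

def pack (tag a b j p : ℕ) : ℕ := Nat.pair tag (Nat.pair a (Nat.pair b (Nat.pair j p)))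

def State.encode : State → ℕ
  | scan a b j p => pack 0 a b j p
  | slideLeft a b j r => pack 1 a b j r
  | slideRight a b j r => pack 2 a b j r
  | halt => pack 3 0 0 0 0

def State.decode (v : ℕ) : State :=
  let a := v.unpair.2.unpair.1
  let b := v.unpair.2.unpair.2.unpair.1
  let j := v.unpair.2.unpair.2.unpair.2.unpair.1
  let p := v.unpair.2.unpair.2.unpair.2.unpair.2
  match v.unpair.1 with
  | 0 => scan a b j p
  | 1 => slideLeft a b j p
  | 2 => slideRight a b j p
  | _ => halt

theorem State.decode_encode (s : State) : decode (encode s) = s := by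
  cases s <;> simp [encode, decode, pack]

theorem pair_lt_sq {a b K : ℕ} (ha : a < K) (hb : b < K) : Nat.pair a b < K ^ 2 :=
  (Nat.pair_lt_max_add_one_sq a b).trans_le (Nat.pow_le_pow_left (by omega) 2)

theorem pack_lt {tag a b j p K : ℕ} (htag : tag < K) (ha : a < K) (hb : b < K) (hj : j < K)
    (hp : p < K) : pack tag a b j p < K ^ 16 := by
  have lift : ∀ {y : ℕ} (L : ℕ), y < L → y < L ^ 2 := fun L hy =>
    hy.trans_le (Nat.le_self_pow two_ne_zero L)
  calc pack tag a b j p < (((K ^ 2) ^ 2) ^ 2) ^ 2 :=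
        pair_lt_sq (lift _ (lift _ (lift _ htag))) <| pair_lt_sq (lift _ (lift _ ha)) <|
          pair_lt_sq (lift _ hb) (pair_lt_sq hj hp)
    _ = K ^ 16 := by ring

variable {α : Type} [LinearOrder α] {n : ℕ} {x : ℕ → α}

-- `r < a + n` (resp. `b ≤ r`) keeps `r` in every window still to be visited by the slide, so
-- the element leaving the window is never the current maximum.
def Inv (n : ℕ) (x : ℕ → α) : State → Prop
  | scan a b j p => a < b ∧ b ≤ n ∧ j ≤ mid a b + n ∧ IsArgmaxOn x (Ico (mid a b) j) p
  | slideLeft a b j r =>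
    a < b ∧ b ≤ n ∧ a ≤ j ∧ j ≤ mid a b ∧ r < a + n ∧ IsArgmaxOn x (window n j) r
  | slideRight a b j r =>
    a < b ∧ b ≤ n ∧ mid a b ≤ j ∧ j < b ∧ b ≤ r ∧ IsArgmaxOn x (window n j) r
  | halt => True

theorem inv_enter {a b : ℕ} (hb : b ≤ n) : Inv n x (enter a b) := by
  unfold enter
  split_ifs with hab
  · have hmid := two_mul_mid_bounds a b
    refine ⟨hab, hb, by omega, by simp, isMaxOn_iff.2 fun k hk => ?_⟩
    rw [mem_Ico] at hk
    rw [show k = mid a b by omega]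
  · trivial

theorem inv_next_scan {a b j p : ℕ} (h : Inv n x (scan a b j p)) :
    Inv n x (next n (scan a b j p) (decide (x p ≤ x j))) := by
  obtain ⟨hab, hb, hj, hp⟩ := h
  have hpj := mem_Ico.1 hp.1
  have hmid := two_mul_mid_bounds a b
  simp only [next, decide_eq_true_eq]
  by_cases hjn : j < mid a b + n
  · rw [if_pos hjn]
    refine ⟨hab, hb, by omega, hp.ite_of_subset_insert ?_ ?_ fun k hk => ?_⟩ <;>
      simp only [mem_insert_iff, mem_Ico] at * <;> omega
  · have hp' : IsArgmaxOn x (window n (mid a b)) p := by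
      rwa [window, show mid a b + n = j by omega]
    rw [if_neg hjn]
    split_ifs with hpa
    · exact ⟨hab, hb, by omega, le_rfl, hpa, hp'⟩
    · exact ⟨hab, hb, le_rfl, by omega, by omega, hp'⟩

theorem inv_next_slideLeft {a b j r : ℕ} (h : Inv n x (slideLeft a b j r)) :
    Inv n x (next n (slideLeft a b j r) (decide (x r ≤ x (j - 1)))) := by
  obtain ⟨hab, hb, haj, hj, hra, hr⟩ := h
  have hrj := mem_Ico.1 hr.1
  simp only [next, decide_eq_true_eq]
  by_cases hja : a < j
  · rw [if_pos hja]
    refine ⟨hab, hb, by omega, by omega, ?_, hr.ite_of_subset_insert ?_ ?_ fun k hk => ?_⟩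
    · split_ifs <;> omega
    all_goals simp only [window, mem_insert_iff, mem_Ico] at *; omega
  · rw [if_neg hja]
    exact inv_enter hb

theorem inv_next_slideRight {a b j r : ℕ} (h : Inv n x (slideRight a b j r)) :
    Inv n x (next n (slideRight a b j r) (decide (x r ≤ x (j + n)))) := by
  obtain ⟨hab, hb, hmj, hjb, hbr, hr⟩ := h
  have hrj := mem_Ico.1 hr.1
  have hmid := two_mul_mid_bounds a b
  simp only [next, decide_eq_true_eq]
  by_cases hjb' : j + 1 < b
  · rw [if_pos hjb']
    refine ⟨hab, hb, by omega, hjb', ?_, hr.ite_of_subset_insert ?_ ?_ fun k hk => ?_⟩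
    · split_ifs <;> omega
    all_goals simp only [window, mem_insert_iff, mem_Ico] at *; omega
  · rw [if_neg hjb']
    exact inv_enter (by omega)

theorem inv_run (x : ℕ → α) (t : ℕ) : Inv n x ((program n).run x t) := by
  refine (program n).run_mem_of_next_mem x (I := {s | Inv n x s}) (inv_enter le_rfl) ?_ t
  rintro (⟨a, b, j, p⟩ | ⟨a, b, j, r⟩ | ⟨a, b, j, r⟩ | _) h
  exacts [inv_next_scan h, inv_next_slideLeft h, inv_next_slideRight h, trivial]

theorem emit_eq_some_correct {s : State} {i p : ℕ} (h : Inv n x s) (he : emit s = some (i, p)) :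
    i < n ∧ i ≤ p ∧ p < i + n ∧ ∀ k, i ≤ k → k < i + n → x k ≤ x p := by
  obtain ⟨a, b, j, q⟩ | ⟨a, b, j, r⟩ | ⟨a, b, j, r⟩ | _ := s <;>
    simp only [emit, reduceCtorEq, Option.some.injEq, Prod.mk.injEq] at he
  all_goals
    obtain ⟨rfl, rfl⟩ := he
    obtain ⟨hab, hb, hj₁, hj₂, -, hmem, hmax⟩ := h
    have hmid := two_mul_mid_bounds a b
    exact ⟨by omega, (mem_Ico.1 hmem).1, (mem_Ico.1 hmem).2,
      fun k hk₁ hk₂ => isMaxOn_iff.1 hmax k (mem_Ico.2 ⟨hk₁, hk₂⟩)⟩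

theorem encode_lt_of_inv (hn : 2 ≤ n) {s : State} (h : Inv n x s) :
    s.encode < (2 * n) ^ 16 := by
  obtain ⟨a, b, j, p⟩ | ⟨a, b, j, r⟩ | ⟨a, b, j, r⟩ | _ := s
  · obtain ⟨hab, hb, hj, hp, -⟩ := h
    have hmid := two_mul_mid_bounds a b
    have hpj := mem_Ico.1 hp
    exact pack_lt (by omega) (by omega) (by omega) (by omega) (by omega)
  · obtain ⟨hab, hb, -, hj, hra, -⟩ := h
    have hmid := two_mul_mid_bounds a b
    exact pack_lt (by omega) (by omega) (by omega) (by omega) (by omega)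
  · obtain ⟨hab, hb, -, hjb, -, hr, -⟩ := h
    have hrj := mem_Ico.1 hr
    exact pack_lt (by omega) (by omega) (by omega) (by omega) (by omega)
  · exact pack_lt (by omega) (by omega) (by omega) (by omega) (by omega)

theorem run_scan {a b t : ℕ} (hab : a < b) (hb : b ≤ n)
    (h : (program n).run x t = enter a b) :
    ∃ p, (program n).run x (t + n) =
      if p < a + n then slideLeft a b (mid a b) p else slideRight a b (mid a b) p := by
  obtain ⟨p, hp⟩ := (program n).run_add_mem x
    (Q := fun d => {s | ∃ p, s = scan a b (mid a b + 1 + d) p}) (D := n - 1)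
    ⟨mid a b, by rw [h, enter, if_pos hab]⟩
    (by
      rintro d hd _ ⟨p, rfl⟩ c
      exact ⟨_, if_pos (show mid a b + 1 + d < mid a b + n by omega)⟩) (n - 1) le_rfl
  refine ⟨p, ?_⟩
  rw [show t + n = t + (n - 1) + 1 by omega, ComparisonProgram.run_succ, hp]
  simp only [program, next, if_neg (show ¬ mid a b + 1 + (n - 1) < mid a b + n by omega)]

theorem run_slideLeft {a b t p : ℕ} (hab : a < b)
    (h : (program n).run x t = slideLeft a b (mid a b) p) :
    (∀ d ≤ mid a b - a, ∃ r, (program n).run x (t + d) = slideLeft a b (mid a b - d) r) ∧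
      (program n).run x (t + (mid a b - a) + 1) = enter (mid a b + 1) b := by
  have hmid := two_mul_mid_bounds a b
  have hslide := (program n).run_add_mem x
    (Q := fun d => {s | ∃ r, s = slideLeft a b (mid a b - d) r}) (D := mid a b - a) ⟨p, h⟩
    (by
      rintro d hd _ ⟨r, rfl⟩ c
      exact ⟨_, (if_pos (show a < mid a b - d by omega)).trans (by rw [Nat.sub_sub])⟩)
  refine ⟨hslide, ?_⟩
  obtain ⟨r, hr⟩ := hslide _ le_rfl
  rw [ComparisonProgram.run_succ, hr]
  simp only [program, next, if_neg (show ¬ a < mid a b - (mid a b - a) by omega)]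

theorem run_slideRight {a b t p : ℕ} (hab : a < b)
    (h : (program n).run x t = slideRight a b (mid a b) p) :
    (∀ d < b - mid a b, ∃ r, (program n).run x (t + d) = slideRight a b (mid a b + d) r) ∧
      (program n).run x (t + (b - mid a b)) = enter a (mid a b) := by
  have hmid := two_mul_mid_bounds a b
  have hslide := (program n).run_add_mem x (D := b - mid a b - 1)
    (Q := fun d => {s | ∃ r, s = slideRight a b (mid a b + d) r}) ⟨p, h⟩
    (by
      rintro d hd _ ⟨r, rfl⟩ c
      exact ⟨_, if_pos (show mid a b + d + 1 < b by omega)⟩)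
  refine ⟨fun d hd => hslide d (by omega), ?_⟩
  obtain ⟨r, hr⟩ := hslide _ le_rfl
  rw [show t + (b - mid a b) = t + (b - mid a b - 1) + 1 by omega,
    ComparisonProgram.run_succ, hr]
  simp only [program, next, if_neg (show ¬ mid a b + (b - mid a b - 1) + 1 < b by omega)]

theorem exists_emit_of_run_eq_enter {k t a b i : ℕ} (hb : b ≤ n) (hk : b - a < 2 ^ k)
    (h : (program n).run x t = enter a b) (hi : i ∈ Ico a b) :
    ∃ t' ≤ t + 2 * n * k, ∃ p, emit ((program n).run x t') = some (i, p) := by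
  induction k generalizing t a b with
  | zero => rw [mem_Ico] at hi; rw [pow_zero] at hk; omega
  | succ k ih =>
    rw [mem_Ico] at hi
    rw [pow_succ] at hk
    rw [mul_add_one]
    have hmid := two_mul_mid_bounds a b
    obtain ⟨p, hp⟩ := run_scan (by omega) hb h
    split_ifs at hp
    · obtain ⟨hslide, hnext⟩ := run_slideLeft (by omega) hp
      rcases le_or_gt i (mid a b) with him | him
      · obtain ⟨r, hr⟩ := hslide (mid a b - i) (by omega)
        refine ⟨t + n + (mid a b - i), by omega, r, ?_⟩
        rw [hr, show mid a b - (mid a b - i) = i by omega]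
        rfl
      · obtain ⟨t', ht', he⟩ := ih hb (by omega) hnext (mem_Ico.2 ⟨him, hi.2⟩)
        exact ⟨t', by omega, he⟩
    · obtain ⟨hslide, hnext⟩ := run_slideRight (by omega) hp
      rcases le_or_gt (mid a b) i with him | him
      · obtain ⟨r, hr⟩ := hslide (i - mid a b) (by omega)
        refine ⟨t + n + (i - mid a b), by omega, r, ?_⟩
        rw [hr, show mid a b + (i - mid a b) = i by omega]
        rfl
      · obtain ⟨t', ht', he⟩ := ih (by omega) (by omega) hnext (mem_Ico.2 ⟨hi.1, him⟩)
        exact ⟨t', by omega, he⟩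

end SlidingWindowMax

open SlidingWindowMax in
/-- There is a deterministic comparison-based algorithm computing the maximum over all
`n` sliding windows of length `n` in a string of length `2n-1`, using `O(n log n)`
comparisons and `O(log n)` words (hence `O(log² n)` bits, i.e. `2^{O(log² n)}` states)
of working memory. -/
theorem stmt17 :
    ∃ C : ℕ, 0 < C ∧ ∀ n : ℕ, 2 ≤ n →
      ∃ (M : ℕ) (start : Fin M) (query : Fin M → ℕ × ℕ)
        (next : Fin M → Bool → Fin M) (emit : Fin M → Option (ℕ × ℕ)) (T : ℕ),
        M ≤ 2 ^ (C * (Nat.log 2 n + 1) ^ 2) ∧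
        T ≤ C * n * (Nat.log 2 n + 1) ∧
        ∀ (α : Type) [LinearOrder α], ∀ x : ℕ → α,
          (∀ i, i < n → ∃ t ≤ T, ∃ p,
            emit (bpRun start query next x t) = some (i, p) ∧
            i ≤ p ∧ p < i + n ∧ ∀ j, i ≤ j → j < i + n → x j ≤ x p) ∧
          (∀ t ≤ T, ∀ i p, emit (bpRun start query next x t) = some (i, p) →
            i < n ∧ i ≤ p ∧ p < i + n ∧ ∀ j, i ≤ j → j < i + n → x j ≤ x p) := by
  refine ⟨32, by norm_num, fun n hn => ?_⟩
  have hM : 0 < (2 * n) ^ 16 := by positivity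
  let P := (program n).encode State.encode State.decode _ hM
  have hemit : ∀ (α : Type) [LinearOrder α] (x : ℕ → α) (t : ℕ),
      P.emit (bpRun P.start P.query P.next x t) = emit ((program n).run x t) := by
    intro α _ x t
    rw [ComparisonProgram.bpRun_eq_run]
    exact ComparisonProgram.emit_run_encode State.decode_encode
      (fun t => encode_lt_of_inv hn (inv_run x t)) t
  have hlog := Nat.lt_pow_succ_log_self one_lt_two n
  refine ⟨_, P.start, P.query, P.next, P.emit, 2 * n * (Nat.log 2 n + 1), ?_,
    by gcongr; norm_num, fun α _ x => ⟨fun i hi => ?_, fun t _ i p he => ?_⟩⟩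
  · calc (2 * n) ^ 16 ≤ (2 ^ (Nat.log 2 n + 2)) ^ 16 := by gcongr; rw [pow_succ]; omega
      _ = 2 ^ (16 * (Nat.log 2 n + 2)) := by rw [← pow_mul, mul_comm]
      _ ≤ 2 ^ (32 * (Nat.log 2 n + 1) ^ 2) := Nat.pow_le_pow_right two_pos (by nlinarith)
  · obtain ⟨t, ht, p, he⟩ := exists_emit_of_run_eq_enter (x := x) (k := Nat.log 2 n + 1)
      (t := 0) le_rfl (by simpa using hlog) rfl (mem_Ico.2 ⟨Nat.zero_le i, hi⟩)
    exact ⟨t, by simpa using ht, p, (hemit α x t).trans he,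
      (emit_eq_some_correct (inv_run x t) he).2⟩
  · rw [hemit α x t] at he
    exact emit_eq_some_correct (inv_run x t) he
end

section
/- Sorting reduces to sliding-window order statistics: given t values s_1,...,s_t ∈ {2,...,n-1}, form a string of length 2n-1 whose first n-t entries equal n, whose last n-1 entries equal 1, and whose remaining t entries are s_1,...,s_t. Then for i = 1,...,t, the t-th order statistic of the i-th window of length n equals the i-th largest element of {s_1,...,s_t}; hence the first t outputs of O_t^{⊞n} list the multiset {s_1,...,s_t} in decreasing-rank (i.e., sorted) order. -/
/-! The window starting at position `j` consists of `n - t - j` copies of `n`, then `s`, then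
`j` copies of `1`. As `1 ≤ s_k ≤ n`, sorting it yields `j` ones, then `s` sorted, then the
copies of `n`, so its entry at `t - 1 = j + (t - 1 - j)` is the entry of sorted `s` at
`t - 1 - j`. -/

theorem Multiset.sort_replicate_append_append_replicate {α : Type*} [LinearOrder α]
    {lo hi : α} (a b : ℕ) (l : List α) (hlo : ∀ y ∈ l, lo ≤ y) (hhi : ∀ y ∈ l, y ≤ hi)
    (hlohi : lo ≤ hi) :
    Multiset.sort ((List.replicate a hi ++ l ++ List.replicate b lo : List α) : Multiset α)
        (· ≤ ·)
      = List.replicate b lo ++ Multiset.sort (l : Multiset α) (· ≤ ·) ++ List.replicate a hi := by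
  refine List.Perm.eq_of_pairwise' (Multiset.pairwise_sort _ _) ?_ ?_
  · simp only [List.pairwise_append, List.pairwise_replicate, Multiset.pairwise_sort,
      List.mem_append, List.mem_replicate, Multiset.mem_sort, Multiset.mem_coe]
    refine ⟨⟨by simp, trivial, ?_⟩, by simp, ?_⟩
    · rintro _ ⟨_, rfl⟩ y hy
      exact hlo y hy
    · rintro y (⟨_, rfl⟩ | hy) _ ⟨_, rfl⟩
      exacts [hlohi, hhi y hy]
  · rw [← Multiset.coe_eq_coe, Multiset.sort_eq, ← Multiset.coe_add, ← Multiset.coe_add,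
      ← Multiset.coe_add, ← Multiset.coe_add, Multiset.sort_eq]
    abel

theorem List.getElem!_replicate_append_append {α : Type*} [Inhabited α] (a : α) (b : ℕ)
    (l l' : List α) {k : ℕ} (hk : k < l.length) :
    (List.replicate b a ++ l ++ l')[b + k]! = l[k]! := by
  simp [List.getElem!_eq_getElem?_getD, List.getElem?_append_left, hk,
    List.getElem?_append_right]

open List in
theorem window_eq_replicate_append_ofFn_append_replicate {n t j : ℕ} (hj : j < t)
    (hjt : j + t ≤ n) {s : Fin t → ℕ} {x : ℕ → ℕ}
    (hx1 : ∀ i, i < n - t → x i = n)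
    (hx2 : ∀ j : Fin t, x (n - t + (j : ℕ)) = s j)
    (hx3 : ∀ i, n ≤ i → i < 2 * n - 1 → x i = 1) :
    (range n).map (fun k => x (j + k)) = replicate (n - t - j) n ++ ofFn s ++ replicate j 1 := by
  obtain ⟨a, rfl⟩ : ∃ a, n = a + t + j := ⟨n - t - j, by omega⟩
  rw [range_add, range_add]
  simp only [map_append, map_map]
  congr 1; congr 1
  · refine eq_replicate_iff.2 ⟨by simp; omega, ?_⟩
    simp only [mem_map, mem_range]
    rintro _ ⟨k, hk, rfl⟩
    exact hx1 _ (by omega)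
  · refine ext_getElem (by simp) fun k hk _ => ?_
    simp only [getElem_map, getElem_range, Function.comp_apply, List.getElem_ofFn]
    simp only [length_map, length_range] at hk
    rw [show j + (a + k) = a + t + j - t + k by omega]
    exact hx2 ⟨k, hk⟩
  · refine eq_replicate_iff.2 ⟨by simp, ?_⟩
    simp only [mem_map, mem_range]
    rintro _ ⟨k, hk, rfl⟩
    rw [Function.comp_apply]
    exact hx3 _ (by omega) (by omega)

theorem stmt18_general (n t : ℕ) (htn : 2 * t ≤ n + 1)
    (s : Fin t → ℕ) (hs : ∀ j, 2 ≤ s j ∧ s j ≤ n - 1)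
    (x : ℕ → ℕ)
    (hx1 : ∀ i, i < n - t → x i = n)
    (hx2 : ∀ j : Fin t, x (n - t + (j : ℕ)) = s j)
    (hx3 : ∀ i, n ≤ i → i < 2 * n - 1 → x i = 1) :
    ∀ i, 1 ≤ i → i ≤ t →
      ((Multiset.sort
          (((List.range n).map (fun k => x (i - 1 + k)) : List ℕ) : Multiset ℕ) (· ≤ ·)
        : List ℕ))[t - 1]!
        = ((Multiset.sort ((List.ofFn s : List ℕ) : Multiset ℕ) (· ≤ ·)
        : List ℕ))[t - i]! := by
  rintro i hi hit
  obtain ⟨j, rfl⟩ : ∃ j, i = j + 1 := ⟨i - 1, by omega⟩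
  have hs_mem : ∀ y ∈ List.ofFn s, 1 ≤ y ∧ y ≤ n := by
    simp only [List.mem_ofFn, forall_exists_index, forall_apply_eq_imp_iff]
    exact fun k => have := hs k; ⟨by omega, by omega⟩
  have h1n : 1 ≤ n := by have := hs ⟨j, by omega⟩; omega
  rw [Nat.add_sub_cancel,
    window_eq_replicate_append_ofFn_append_replicate (by omega) (by omega) hx1 hx2 hx3,
    Multiset.sort_replicate_append_append_replicate _ _ _ (fun y hy => (hs_mem y hy).1)
      (fun y hy => (hs_mem y hy).2) h1n,
    show t - 1 = j + (t - (j + 1)) by omega, List.getElem!_replicate_append_append]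
  simp only [Multiset.length_sort, Multiset.coe_card, List.length_ofFn]
  omega

/-- Sorting reduces to sliding-window order statistics: embed `t` values
`s_1,…,s_t ∈ {2,…,n-1}` into a string of length `2n-1` whose first `n-t` entries are
`n` and whose last `n-1` entries are `1` (0-indexed).  Then for `i = 1,…,t`, the `t`-th
smallest element of the `i`-th window of length `n` equals the `i`-th largest of the
`s_j`, i.e. the `(t-i+1)`-th smallest. -/
theorem stmt18 (n t : ℕ) (hn : 3 ≤ n) (ht : 1 ≤ t) (htn : 2 * t ≤ n + 1)
    (s : Fin t → ℕ) (hs : ∀ j, 2 ≤ s j ∧ s j ≤ n - 1)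
    (x : ℕ → ℕ)
    (hx1 : ∀ i, i < n - t → x i = n)
    (hx2 : ∀ j : Fin t, x (n - t + (j : ℕ)) = s j)
    (hx3 : ∀ i, n ≤ i → i < 2 * n - 1 → x i = 1) :
    ∀ i, 1 ≤ i → i ≤ t →
      ((Multiset.sort
          (((List.range n).map (fun k => x (i - 1 + k)) : List ℕ) : Multiset ℕ) (· ≤ ·)
        : List ℕ))[t - 1]!
        = ((Multiset.sort ((List.ofFn s : List ℕ) : Multiset ℕ) (· ≤ ·)
        : List ℕ))[t - i]! :=
  stmt18_general n t htn s hs x hx1 hx2 hx3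
end
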